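/- arXiv:2211.09655 — 3 statements merged into one kernel-verified Lean document; each statement's English description precedes it below -/
import Mathlib

section
/- Inverse-enrichment reduction: there exists an ALC_I(V)-k-bisimulation between (I,d) and (J,e) containing ([d],[e]) if and only if there exists an ALC(V^I)-k-bisimulation between the inverse-enrichments (I_I, d) and (J_I, e) containing ([d],[e]). -/
/-- An interpretation over concept names `C` and role names `R` with domain `D`:
it maps concept names to subsets of the domain and role names to binary relations. -/
structure Interp (C R D : Type) where
  concept : C → Set D
  role : R → Set (D × D)

variable {C R DI DJ DK : Type}

/-- `Z` is a `k`-bisimulation between `I` and `J`: a set of pairs of nonempty sequences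
of equal length at most `k+1` satisfying concept-name harmony between last elements
and the role back-and-forth conditions (restricted to the length bound). -/
def IsKBisim (k : ℕ) (I : Interp C R DI) (J : Interp C R DJ)
    (Z : List DI → List DJ → Prop) : Prop :=
  (∀ s s', Z s s' → s ≠ [] ∧ s.length = s'.length ∧ s.length ≤ k + 1) ∧
  (∀ s s' d e, Z (s ++ [d]) (s' ++ [e]) → ∀ c, d ∈ I.concept c ↔ e ∈ J.concept c) ∧
  (∀ s s' d e, Z (s ++ [d]) (s' ++ [e]) → s.length + 2 ≤ k + 1 →
    ∀ r d', (d, d') ∈ I.role r →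
      ∃ e', (e, e') ∈ J.role r ∧ Z (s ++ [d, d']) (s' ++ [e, e'])) ∧
  (∀ s s' d e, Z (s ++ [d]) (s' ++ [e]) → s.length + 2 ≤ k + 1 →
    ∀ r e', (e, e') ∈ J.role r →
      ∃ d', (d, d') ∈ I.role r ∧ Z (s ++ [d, d']) (s' ++ [e, e']))

/-- The inverse-enrichment `I_I`: fresh role names `r_inv` (the `Sum.inr r` components)
are interpreted as the converses of the original roles; original symbols unchanged. -/
def invEnrich (I : Interp C R DI) : Interp C (R ⊕ R) DI where
  concept := I.concept
  role x :=
    match x with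
    | Sum.inl r => I.role r
    | Sum.inr r => {p | (p.2, p.1) ∈ I.role r}

/-- The extra forth/back conditions for inverse steps of an `ALC_I`-`k`-bisimulation. -/
def InvCond (k : ℕ) (I : Interp C R DI) (J : Interp C R DJ)
    (Z : List DI → List DJ → Prop) : Prop :=
  (∀ s s' d e, Z (s ++ [d]) (s' ++ [e]) → s.length + 2 ≤ k + 1 →
    ∀ r d', (d', d) ∈ I.role r →
      ∃ e', (e', e) ∈ J.role r ∧ Z (s ++ [d, d']) (s' ++ [e, e'])) ∧
  (∀ s s' d e, Z (s ++ [d]) (s' ++ [e]) → s.length + 2 ≤ k + 1 →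
    ∀ r e', (e', e) ∈ J.role r →
      ∃ d', (d', d) ∈ I.role r ∧ Z (s ++ [d, d']) (s' ++ [e, e']))

@[simp]
theorem mem_invEnrich_role_inl {I : Interp C R DI} {r : R} {p : DI × DI} :
    p ∈ (invEnrich I).role (Sum.inl r) ↔ p ∈ I.role r :=
  Iff.rfl

@[simp]
theorem mem_invEnrich_role_inr {I : Interp C R DI} {r : R} {p : DI × DI} :
    p ∈ (invEnrich I).role (Sum.inr r) ↔ (p.2, p.1) ∈ I.role r :=
  Iff.rfl

theorem isKBisim_invEnrich_iff {k : ℕ} {I : Interp C R DI} {J : Interp C R DJ}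
    {Z : List DI → List DJ → Prop} :
    IsKBisim k (invEnrich I) (invEnrich J) Z ↔ IsKBisim k I J Z ∧ InvCond k I J Z := by
  simp only [IsKBisim, InvCond, Sum.forall, mem_invEnrich_role_inl, mem_invEnrich_role_inr,
    forall_and]
  exact ⟨fun ⟨hlen, hcon, ⟨hf, hfi⟩, hb, hbi⟩ => ⟨⟨hlen, hcon, hf, hb⟩, hfi, hbi⟩,
    fun ⟨⟨hlen, hcon, hf, hb⟩, hfi, hbi⟩ => ⟨hlen, hcon, ⟨hf, hfi⟩, hb, hbi⟩⟩

/-- there is an `ALC_I(V)`-`k`-bisimulation between `(I,d)` and `(J,e)`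
containing `([d],[e])` iff there is an `ALC(V^I)`-`k`-bisimulation between the
inverse-enrichments containing `([d],[e])`. -/
theorem invEnrich_reduction (k : ℕ)
    (I : Interp C R DI) (J : Interp C R DJ) (d : DI) (e : DJ) :
    (∃ Z : List DI → List DJ → Prop,
       (IsKBisim k I J Z ∧ InvCond k I J Z) ∧ Z [d] [e]) ↔
    (∃ Z : List DI → List DJ → Prop,
       IsKBisim k (invEnrich I) (invEnrich J) Z ∧ Z [d] [e]) := by
  simp only [isKBisim_invEnrich_iff]
end

section
/- Safe-boolean-role reduction: there exists an ALCb(V)-k-bisimulation between (I,d) and (J,e) containing ([d],[e]) if and only if there exists an ALC(V^b)-k-bisimulation between the b-enrichments (I_b, d) and (J_b, e) containing ([d],[e]). -/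
variable {C R DI DJ DK : Type}

/-- The b-enrichment `I_b`: role names are the nonempty subsets `S` of the original
role names, with `r_S` interpreted as the pairs whose exact 2-type is `S`. -/
def bEnrich (I : Interp C R DI) : Interp C {S : Set R // S.Nonempty} DI where
  concept := I.concept
  role S := {p | S.1 = {r : R | p ∈ I.role r}}

/-- The extra condition of an `ALCb`-`k`-bisimulation: witnesses must preserve
the exact set of roles connecting the two elements. -/
def BCond (k : ℕ) (I : Interp C R DI) (J : Interp C R DJ)
    (Z : List DI → List DJ → Prop) : Prop :=
  (∀ s s' d e, Z (s ++ [d]) (s' ++ [e]) → s.length + 2 ≤ k + 1 →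
    ∀ r d', (d, d') ∈ I.role r →
      ∃ e', {r' : R | (d, d') ∈ I.role r'} = {r' : R | (e, e') ∈ J.role r'} ∧
        Z (s ++ [d, d']) (s' ++ [e, e'])) ∧
  (∀ s s' d e, Z (s ++ [d]) (s' ++ [e]) → s.length + 2 ≤ k + 1 →
    ∀ r e', (e, e') ∈ J.role r →
      ∃ d', {r' : R | (d, d') ∈ I.role r'} = {r' : R | (e, e') ∈ J.role r'} ∧
        Z (s ++ [d, d']) (s' ++ [e, e']))

/- In the enrichment, a witness for `r_S` is exactly a witness whose role set is `S`. Hence an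
`ALCb`-witness for `(d, d') ∈ r^I` is an enriched witness for `r_S` with `S` the role set of
`(d, d')`, which is nonempty because it contains `r`; conversely every enriched witness has the
same role set, so it is also a plain `ALC`-witness for each role in it. -/

section

variable {k : ℕ} {I : Interp C R DI} {J : Interp C R DJ} {Z : List DI → List DJ → Prop}

theorem mem_bEnrich_role {S : {S : Set R // S.Nonempty}} {p : DI × DI} :
    p ∈ (bEnrich I).role S ↔ S.1 = {r | p ∈ I.role r} :=
  Iff.rfl

theorem exists_mem_role_of_mem_bEnrich_role {S : {S : Set R // S.Nonempty}} {p : DI × DI}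
    (h : p ∈ (bEnrich I).role S) : ∃ r, p ∈ I.role r :=
  (mem_bEnrich_role.1 h ▸ S.2 : ({r | p ∈ I.role r} : Set R).Nonempty)

theorem bEnrich_role_congr {p : DI × DI} {q : DJ × DJ}
    (h : {r | p ∈ I.role r} = {r | q ∈ J.role r}) (S : {S : Set R // S.Nonempty}) :
    p ∈ (bEnrich I).role S ↔ q ∈ (bEnrich J).role S := by
  rw [mem_bEnrich_role, mem_bEnrich_role, h]

theorem BCond.isKBisim_bEnrich_iff (hb : BCond k I J Z) :
    IsKBisim k (bEnrich I) (bEnrich J) Z ↔ IsKBisim k I J Z := by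
  obtain ⟨forth, back⟩ := hb
  refine and_congr_right' <| and_congr_right' <| iff_of_true ⟨?_, ?_⟩ ⟨?_, ?_⟩
  · intro s s' d e hZ hs S d' hd
    obtain ⟨r, hr⟩ := exists_mem_role_of_mem_bEnrich_role hd
    exact (forth s s' d e hZ hs r d' hr).imp fun _ h => ⟨(bEnrich_role_congr h.1 S).1 hd, h.2⟩
  · intro s s' d e hZ hs S e' he
    obtain ⟨r, hr⟩ := exists_mem_role_of_mem_bEnrich_role he
    exact (back s s' d e hZ hs r e' hr).imp fun _ h => ⟨(bEnrich_role_congr h.1 S).2 he, h.2⟩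
  · intro s s' d e hZ hs r d' hd
    exact (forth s s' d e hZ hs r d' hd).imp fun _ h => ⟨(Set.ext_iff.1 h.1 r).1 hd, h.2⟩
  · intro s s' d e hZ hs r e' he
    exact (back s s' d e hZ hs r e' he).imp fun _ h => ⟨(Set.ext_iff.1 h.1 r).2 he, h.2⟩

theorem IsKBisim.bCond_of_bEnrich (h : IsKBisim k (bEnrich I) (bEnrich J) Z) :
    BCond k I J Z := by
  obtain ⟨-, -, forth, back⟩ := h
  constructor
  · intro s s' d e hZ hs r d' hd
    exact forth s s' d e hZ hs ⟨{r | (d, d') ∈ I.role r}, r, hd⟩ d' rfl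
  · intro s s' d e hZ hs r e' he
    exact (back s s' d e hZ hs ⟨{r | (e, e') ∈ J.role r}, r, he⟩ e' rfl).imp
      fun _ h => ⟨h.1.symm, h.2⟩

end

/-- there is an `ALCb(V)`-`k`-bisimulation between `(I,d)` and `(J,e)`
containing `([d],[e])` iff there is an `ALC(V^b)`-`k`-bisimulation between the
b-enrichments containing `([d],[e])`. -/
theorem bEnrich_reduction (k : ℕ)
    (I : Interp C R DI) (J : Interp C R DJ) (d : DI) (e : DJ) :
    (∃ Z : List DI → List DJ → Prop,
       (IsKBisim k I J Z ∧ BCond k I J Z) ∧ Z [d] [e]) ↔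
    (∃ Z : List DI → List DJ → Prop,
       IsKBisim k (bEnrich I) (bEnrich J) Z ∧ Z [d] [e]) := by
  constructor
  · rintro ⟨Z, ⟨hZ, hb⟩, hde⟩
    exact ⟨Z, hb.isKBisim_bEnrich_iff.2 hZ, hde⟩
  · rintro ⟨Z, hZ, hde⟩
    have hb := hZ.bCond_of_bEnrich
    exact ⟨Z, ⟨hb.isKBisim_bEnrich_iff.1 hZ, hb⟩, hde⟩
end

section
/- Counit law A for the ALC-comonad: the Kleisli coextension of the counit is the identity, i.e., (ε_I)* = id on D_k(I,d). -/
variable {C R DI DJ DK : Type}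

/-- `ValidFrom I a l`: the alternating sequence of role steps `l` is a valid path in `I`
starting at `a` (consecutive elements are connected by the corresponding role). -/
def ValidFrom (I : Interp C R DI) : DI → List (R × DI) → Prop
  | _, [] => True
  | a, p :: rest => (a, p.2) ∈ I.role p.1 ∧ ValidFrom I p.2 rest

/-- Last domain element of the path `d · l`. -/
def pathLast (d : DI) (l : List (R × DI)) : DI := (l.map Prod.snd).getLastD d

/-- An element of the depth-`k` unravelling of `(I, d)`:
an alternating sequence `[d, r₁, a₁, …, r_j, a_j]`, encoded by its list of steps. -/
structure UnravelElem (I : Interp C R DI) (d : DI) (k : ℕ) where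
  steps : List (R × DI)
  len_le : steps.length ≤ k
  valid : ValidFrom I d steps

/-- The depth-`k` unravelling `D_k(I, d)` as an interpretation. -/
def unravel (I : Interp C R DI) (d : DI) (k : ℕ) : Interp C R (UnravelElem I d k) where
  concept c := {s | pathLast d s.steps ∈ I.concept c}
  role r := {p | ∃ b, p.2.steps = p.1.steps ++ [(r, b)]}

/-- The distinguished element `[d]` of the unravelling. -/
def uroot (I : Interp C R DI) (d : DI) (k : ℕ) : UnravelElem I d k :=
  ⟨[], by simp, trivial⟩

/-- The counit `ε`, sending a sequence to its last element. -/
def counit (I : Interp C R DI) (d : DI) (k : ℕ) (s : UnravelElem I d k) : DI :=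
  pathLast d s.steps

/-- Homomorphism of pointed interpretations. -/
structure IsHom (I : Interp C R DI) (dI : DI) (J : Interp C R DJ) (dJ : DJ)
    (h : DI → DJ) : Prop where
  point : h dI = dJ
  concept : ∀ c x, x ∈ I.concept c → h x ∈ J.concept c
  role : ∀ r x y, (x, y) ∈ I.role r → (h x, h y) ∈ J.role r

theorem pathLast_concat (d : DI) (l : List (R × DI)) (p : R × DI) :
    pathLast d (l ++ [p]) = p.2 := by
  simp [pathLast]

theorem pathLast_cons (d : DI) (p : R × DI) (l : List (R × DI)) :
    pathLast d (p :: l) = pathLast p.2 l := by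
  cases l with
  | nil => rfl
  | cons q m => simp only [pathLast, List.map_cons, List.getLastD_cons]

theorem validFrom_append (I : Interp C R DI) :
    ∀ (a : DI) (l₁ l₂ : List (R × DI)),
      ValidFrom I a (l₁ ++ l₂) ↔ ValidFrom I a l₁ ∧ ValidFrom I (pathLast a l₁) l₂
  | a, [], l₂ => by simp [ValidFrom, pathLast]
  | a, p :: rest, l₂ => by
      simp [ValidFrom, validFrom_append I p.2 rest l₂, pathLast_cons, and_assoc]

/-- Auxiliary for the Kleisli coextension: process the steps from the left,
carrying the already-consumed prefix. -/
def coextFrom (F : List (R × DI) → DJ) : List (R × DI) → List (R × DI) → List (R × DJ)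
  | _, [] => []
  | pre, p :: rest => (p.1, F (pre ++ [p])) :: coextFrom F (pre ++ [p]) rest

/-- Raw Kleisli coextension on step lists: satisfies `coextList F [] = []` and
`coextList F (s ++ [(r,d')]) = coextList F s ++ [(r, F (s ++ [(r,d')]))]`. -/
def coextList (F : List (R × DI) → DJ) (l : List (R × DI)) : List (R × DJ) :=
  coextFrom F [] l

open Classical in
/-- Lift a function on unravelling elements to all step lists (junk value elsewhere). -/
noncomputable def liftF (I : Interp C R DI) (dI : DI) (k : ℕ)
    (f : UnravelElem I dI k → DJ) (default : DJ) (l : List (R × DI)) : DJ :=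
  if h : l.length ≤ k ∧ ValidFrom I dI l then f ⟨l, h.1, h.2⟩ else default

theorem coextFrom_length (F : List (R × DI) → DJ) :
    ∀ pre l, (coextFrom F pre l).length = l.length
  | _, [] => rfl
  | pre, p :: rest => by
      simp [coextFrom, coextFrom_length F (pre ++ [p]) rest]

theorem coextFrom_concat (F : List (R × DI) → DJ) :
    ∀ pre l x, coextFrom F pre (l ++ [x]) =
      coextFrom F pre l ++ [(x.1, F (pre ++ l ++ [x]))]
  | pre, [], x => by simp [coextFrom]
  | pre, p :: rest, x => by
      simp [coextFrom, coextFrom_concat F (pre ++ [p]) rest x]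

theorem coext_spec {I : Interp C R DI} {dI : DI} {k : ℕ} {J : Interp C R DJ} {dJ : DJ}
    (f : UnravelElem I dI k → DJ)
    (hf : IsHom (unravel I dI k) (uroot I dI k) J dJ f) :
    ∀ (l : List (R × DI)) (hl : l.length ≤ k) (hv : ValidFrom I dI l),
      ValidFrom J dJ (coextList (liftF I dI k f dJ) l) ∧
      pathLast dJ (coextList (liftF I dI k f dJ) l) = f ⟨l, hl, hv⟩ := by
  intro l
  induction l using List.reverseRecOn with
  | nil =>
      intro hl hv
      refine ⟨trivial, ?_⟩
      exact hf.point.symm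
  | append_singleton m p ih =>
      intro hl hv
      have hm : m.length ≤ k := by
        have h' := hl
        simp only [List.length_append, List.length_singleton] at h'
        omega
      have hvm : ValidFrom I dI m := ((validFrom_append I dI m [p]).mp hv).1
      obtain ⟨ihv, ihl⟩ := ih hm hvm
      have hedge : ((⟨m, hm, hvm⟩ : UnravelElem I dI k), (⟨m ++ [p], hl, hv⟩ : UnravelElem I dI k))
          ∈ (unravel I dI k).role p.1 := ⟨p.2, by simp⟩
      have hr : (f ⟨m, hm, hvm⟩, f ⟨m ++ [p], hl, hv⟩) ∈ J.role p.1 :=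
        hf.role p.1 _ _ hedge
      have hF : liftF I dI k f dJ (m ++ [p]) = f ⟨m ++ [p], hl, hv⟩ := by
        unfold liftF
        rw [dif_pos (⟨hl, hv⟩ : (m ++ [p]).length ≤ k ∧ ValidFrom I dI (m ++ [p]))]
      have hcoe : coextList (liftF I dI k f dJ) (m ++ [p]) =
          coextList (liftF I dI k f dJ) m ++ [(p.1, f ⟨m ++ [p], hl, hv⟩)] := by
        unfold coextList
        rw [coextFrom_concat]
        simp only [List.nil_append, hF]
      rw [hcoe]
      constructor
      · rw [validFrom_append]
        exact ⟨ihv, by rw [ihl]; exact ⟨hr, trivial⟩⟩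
      · rw [pathLast_concat]

/-- The Kleisli coextension `f* : D_k(I,d) → D_k(J,e)` of a homomorphism
`f : D_k(I,d) → (J,e)`. -/
noncomputable def coext {I : Interp C R DI} {dI : DI} {k : ℕ} {J : Interp C R DJ} {dJ : DJ}
    (f : UnravelElem I dI k → DJ)
    (hf : IsHom (unravel I dI k) (uroot I dI k) J dJ f)
    (s : UnravelElem I dI k) : UnravelElem J dJ k :=
  ⟨coextList (liftF I dI k f dJ) s.steps,
   by simpa [coextList, coextFrom_length] using s.len_le,
   (coext_spec f hf s.steps s.len_le s.valid).1⟩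

theorem coextList_counit {k : ℕ} {I : Interp C R DI} {dI : DI} :
    ∀ (l : List (R × DI)), l.length ≤ k → ValidFrom I dI l →
      coextList (liftF I dI k (counit I dI k) dI) l = l := by
  intro l
  induction l using List.reverseRecOn with
  | nil => intro _ _; rfl
  | append_singleton m p ih =>
      intro hl hv
      have hm : m.length ≤ k := by
        simp only [List.length_append, List.length_singleton] at hl; omega
      have hvm : ValidFrom I dI m := ((validFrom_append I dI m [p]).mp hv).1
      unfold coextList
      rw [coextFrom_concat]
      have hF : liftF I dI k (counit I dI k) dI (m ++ [p]) = p.2 := by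
        unfold liftF
        rw [dif_pos (⟨hl, hv⟩ : (m ++ [p]).length ≤ k ∧ ValidFrom I dI (m ++ [p]))]
        simp [counit, pathLast_concat]
      simp only [List.nil_append, hF]
      rw [show coextFrom (liftF I dI k (counit I dI k) dI) [] m = m from ih hm hvm]

/-- counit law A: the Kleisli coextension of the counit is the identity
on `D_k(I,d)`. -/
theorem coext_counit_eq_id (k : ℕ) (I : Interp C R DI) (dI : DI)
    (he : IsHom (unravel I dI k) (uroot I dI k) I dI (counit I dI k)) :
    coext (counit I dI k) he = id := by
  funext s
  obtain ⟨l, hl, hv⟩ := s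
  simp only [coext, id_eq]
  congr 1
  exact coextList_counit l hl hv
end
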